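/- The k × k grid graph contains a bramble of order at least k + 1; consequently its treewidth is at least k, and any graph containing a k × k grid minor has treewidth at least k. -/

import Mathlib

/-!
The traces of a bramble on a tree decomposition (the nodes whose bags meet a bramble element)
are pairwise intersecting subtrees, so by the Helly property of subtrees of a tree some bag
meets every element of the bramble; hence the treewidth is at least the order minus one.
Replacing each vertex of a minor by its branch set turns a tree decomposition of a graph into
one of the minor, so treewidth is minor-monotone.

In the `k × k` grid, take the crosses of the top-left `(k-1) × (k-1)` subgrid, the bottom row
and the right column minus its bottom vertex. A hitting set misses some row of the subgrid or
meets all of them; in the first case the crosses through that row force a point in every column.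
So it has `k - 1` points in the subgrid, and one more in each of the two disjoint extra sets.
-/

open SimpleGraph

namespace TWPaper

/-- `(T, B)` is a tree decomposition of `G`. -/
def IsTreeDecomp {V ι : Type*} (G : SimpleGraph V) (T : SimpleGraph ι) (B : ι → Set V) : Prop :=
  T.IsTree ∧
  (∀ v w : V, G.Adj v w → ∃ x, v ∈ B x ∧ w ∈ B x) ∧
  (∀ v : V, (T.induce {x | v ∈ B x}).Connected)

/-- `G` has a tree decomposition of width at most `k`. -/
def HasTDWidthLE {V : Type*} (G : SimpleGraph V) (k : ℕ) : Prop :=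
  ∃ (ι : Type) (T : SimpleGraph ι) (B : ι → Set V),
    IsTreeDecomp G T B ∧ ∀ x, (B x).ncard ≤ k + 1

/-- Treewidth of `G`. -/
noncomputable def treewidth {V : Type*} (G : SimpleGraph V) : ℕ :=
  sInf {k | HasTDWidthLE G k}

/-- Two vertex sets touch: they intersect or an edge joins them. -/
def Touches {V : Type*} (G : SimpleGraph V) (A B : Set V) : Prop :=
  (A ∩ B).Nonempty ∨ ∃ a ∈ A, ∃ b ∈ B, G.Adj a b

/-- A bramble: a set of connected subgraphs (given by vertex sets) that pairwise touch. -/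
def IsBramble {V : Type*} (G : SimpleGraph V) (𝓑 : Set (Set V)) : Prop :=
  (∀ A ∈ 𝓑, (G.induce A).Connected) ∧ ∀ A ∈ 𝓑, ∀ B ∈ 𝓑, Touches G A B

/-- `S` hits every element of `𝓑`. -/
def IsHitting {V : Type*} (𝓑 : Set (Set V)) (S : Set V) : Prop :=
  ∀ A ∈ 𝓑, (S ∩ A).Nonempty

/-- The order of a bramble: minimum size of a hitting set. -/
noncomputable def brambleOrder {V : Type*} (𝓑 : Set (Set V)) : ℕ :=
  sInf {n | ∃ S : Set V, IsHitting 𝓑 S ∧ S.ncard = n}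

/-- The bramble number: maximum order of a bramble. -/
noncomputable def brambleNumber {V : Type*} (G : SimpleGraph V) : ℕ :=
  sSup {n | ∃ 𝓑 : Set (Set V), IsBramble G 𝓑 ∧ brambleOrder 𝓑 = n}

/-- A tangle: connected subgraphs such that any three share a vertex or
meet a common edge's endpoints. -/
def IsTangle {V : Type*} (G : SimpleGraph V) (τ : Set (Set V)) : Prop :=
  (∀ A ∈ τ, (G.induce A).Connected) ∧
  ∀ A ∈ τ, ∀ B ∈ τ, ∀ C ∈ τ,
    (∃ v, v ∈ A ∩ B ∩ C) ∨
    ∃ u v, G.Adj u v ∧ (u ∈ A ∨ v ∈ A) ∧ (u ∈ B ∨ v ∈ B) ∧ (u ∈ C ∨ v ∈ C)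

/-- The tangle number: maximum order of a tangle. -/
noncomputable def tangleNumber {V : Type*} (G : SimpleGraph V) : ℕ :=
  sSup {n | ∃ τ : Set (Set V), IsTangle G τ ∧ brambleOrder τ = n}

/-- `G - X` : delete the vertices of `X` (kept on the same vertex type,
vertices of `X` become isolated). -/
def delVerts {V : Type*} (G : SimpleGraph V) (X : Set V) : SimpleGraph V where
  Adj a b := G.Adj a b ∧ a ∉ X ∧ b ∉ X
  symm := by
    constructor
    intro a b h
    exact ⟨h.1.symm, h.2.2, h.2.1⟩
  loopless := by
    constructor
    intro a h
    exact G.loopless.irrefl a h.1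

/-- The vertex set of the component of `G - X` containing `v`. -/
def comp {V : Type*} (G : SimpleGraph V) (X : Set V) (v : V) : Set V :=
  {w | (delVerts G X).Reachable v w}

/-- `X` is a `(k, S, c)`-separator of `G`. -/
def IsSeparator {V : Type*} (G : SimpleGraph V) (k : ℕ) (S : Set V) (c : ℝ) (X : Set V) : Prop :=
  X.ncard ≤ k ∧
  ∀ v ∉ X, ((comp G X v ∩ S).ncard : ℝ) ≤ c * ((S \ X).ncard : ℝ)

/-- The separation number `sep_c(G)`. -/
noncomputable def sepNum {V : Type*} (G : SimpleGraph V) (c : ℝ) : ℕ :=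
  sInf {k | ∀ S : Set V, ∃ X : Set V, IsSeparator G k S c X}

/-- `X` is a `(k, S, c)*`-separator of `G`. -/
def IsStarSeparator {V : Type*} (G : SimpleGraph V) (k : ℕ) (S : Set V) (c : ℝ) (X : Set V) :
    Prop :=
  X.ncard ≤ k ∧
  ∀ v ∉ X, ((comp G X v ∩ (S \ X)).ncard : ℝ) ≤ c * (S.ncard : ℝ)

/-- The variant separation number `sep*_c(G)`. -/
noncomputable def sepStarNum {V : Type*} (G : SimpleGraph V) (c : ℝ) : ℕ :=
  sInf {k | ∀ S : Set V, ∃ X : Set V, IsStarSeparator G k S c X}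

/-- `G` has a branch decomposition of width at most `w`. -/
def HasBDWidthLE {V : Type*} (G : SimpleGraph V) (w : ℕ) : Prop :=
  ∃ (ι : Type) (_ : Finite ι) (T : SimpleGraph ι), T.IsTree ∧
    (∀ x : ι, (T.neighborSet x).ncard = 3 ∨ (T.neighborSet x).ncard = 1) ∧
    ∃ θ : G.edgeSet ≃ {x : ι // (T.neighborSet x).ncard = 1},
      ∀ a b : ι, T.Adj a b →
        {v : V | ∃ e₁ e₂ : G.edgeSet, v ∈ e₁.1 ∧ v ∈ e₂.1 ∧
          ¬ (T.deleteEdges {s(a, b)}).Reachable (θ e₁).1 (θ e₂).1}.ncard ≤ w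

/-- Branchwidth of `G` (`0` if no branch decomposition exists). -/
noncomputable def branchwidth {V : Type*} (G : SimpleGraph V) : ℕ :=
  sInf {w | HasBDWidthLE G w}

/-- `H` is a minor of `G`, via a model of branch sets. -/
def IsMinor {W V : Type*} (H : SimpleGraph W) (G : SimpleGraph V) : Prop :=
  ∃ f : W → Set V,
    (∀ w, (G.induce (f w)).Connected) ∧
    (∀ a b, a ≠ b → Disjoint (f a) (f b)) ∧
    ∀ a b, H.Adj a b → ∃ u ∈ f a, ∃ v ∈ f b, G.Adj u v

/-- The lexicographic product `T[K_k]`. -/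
def treeLex {ι : Type*} (T : SimpleGraph ι) (k : ℕ) : SimpleGraph (ι × Fin k) where
  Adj a b := T.Adj a.1 b.1 ∨ (a.1 = b.1 ∧ a.2 ≠ b.2)
  symm := by
    constructor
    rintro a b (h | ⟨h1, h2⟩)
    · exact Or.inl h.symm
    · exact Or.inr ⟨h1.symm, h2.symm⟩
  loopless := by
    constructor
    rintro a (h | ⟨h1, h2⟩)
    · exact T.loopless.irrefl _ h
    · exact h2 rfl

/-- The lexicographic tree product number. -/
noncomputable def ltp {V : Type*} (G : SimpleGraph V) : ℕ :=
  sInf {k | ∃ (ι : Type) (T : SimpleGraph ι), T.IsTree ∧ IsMinor G (treeLex T k)}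

/-- The cartesian tree product number. -/
noncomputable def ctp {V : Type*} (G : SimpleGraph V) : ℕ :=
  sInf {k | ∃ (ι : Type) (T : SimpleGraph ι), T.IsTree ∧
    IsMinor G (T.boxProd (completeGraph (Fin k)))}

/-- `S` is `k`-linked in `G`. -/
def IsLinked {V : Type*} (G : SimpleGraph V) (k : ℕ) (S : Set V) : Prop :=
  ∀ X : Set V, X.ncard < k → ∃ v, v ∉ X ∧ S.ncard < 2 * (comp G X v ∩ S).ncard

/-- The linkedness of `G`: maximum `k ≥ 1` for which `G` has a `k`-linked set. -/
noncomputable def linkedness {V : Type*} (G : SimpleGraph V) : ℕ :=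
  sSup {k | 0 < k ∧ ∃ S : Set V, IsLinked G k S}

/-- `S` is well-linked in `G`. -/
def WellLinked {V : Type*} (G : SimpleGraph V) (S : Set V) : Prop :=
  ∀ A B : Finset V, ↑A ⊆ S → ↑B ⊆ S → A.card = B.card →
    ∃ (σ : A ≃ B) (p : ∀ a : A, G.Walk (a : V) ((σ a : V))),
      (∀ a, (p a).IsPath) ∧
      ∀ a a' : A, a ≠ a' → ∀ v, v ∈ (p a).support → v ∉ (p a').support

/-- `S` is externally-well-linked in `G`: the linking paths can be chosen with
no internal vertices in `S`. -/
def ExternallyWellLinked {V : Type*} (G : SimpleGraph V) (S : Set V) : Prop :=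
  ∀ A B : Finset V, ↑A ⊆ S → ↑B ⊆ S → A.card = B.card →
    ∃ (σ : A ≃ B) (p : ∀ a : A, G.Walk (a : V) ((σ a : V))),
      (∀ a, (p a).IsPath) ∧
      (∀ a a' : A, a ≠ a' → ∀ v, v ∈ (p a).support → v ∉ (p a').support) ∧
      ∀ a : A, ∀ v ∈ (p a).support, v ∈ S → v = (a : V) ∨ v = ((σ a : V))

/-- The well-linked number of `G`. -/
noncomputable def wellLinkedNum {V : Type*} (G : SimpleGraph V) : ℕ :=
  sSup {n | ∃ S : Set V, WellLinked G S ∧ S.ncard = n}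

/-- A graph is chordal if every cycle of length at least 4 has a chord
(equivalently, there is no induced cycle of length at least four). -/
def Chordal {V : Type*} (H : SimpleGraph V) : Prop :=
  ∀ (v : V) (c : H.Walk v v), c.IsCycle → 4 ≤ c.length →
    ∃ a b, a ∈ c.support ∧ b ∈ c.support ∧ H.Adj a b ∧ s(a, b) ∉ c.edges

/-- `G` is a `k`-tree. -/
inductive IsKTree (k : ℕ) : ∀ (V : Type), SimpleGraph V → Prop
  | base (V : Type) (G : SimpleGraph V) (h : Nonempty (G ≃g completeGraph (Fin (k + 1)))) :
      IsKTree k V G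
  | step (V : Type) (G : SimpleGraph V) (v : V)
      (hdeg : (G.neighborSet v).ncard = k)
      (hcl : G.IsClique (G.neighborSet v))
      (h : IsKTree k ↥{u : V | u ≠ v} (G.induce {u : V | u ≠ v})) :
      IsKTree k V G

/-- The `k × k` grid graph. -/
def grid (k : ℕ) : SimpleGraph (Fin k × Fin k) where
  Adj a b := (a.1 = b.1 ∧ (a.2.val + 1 = b.2.val ∨ b.2.val + 1 = a.2.val)) ∨
             (a.2 = b.2 ∧ (a.1.val + 1 = b.1.val ∨ b.1.val + 1 = a.1.val))
  symm := by
    constructor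
    rintro a b (⟨h1, h2⟩ | ⟨h1, h2⟩)
    · exact Or.inl ⟨h1.symm, h2.symm⟩
    · exact Or.inr ⟨h1.symm, h2.symm⟩
  loopless := by
    constructor
    rintro a (⟨h1, h2⟩ | ⟨h1, h2⟩) <;> omega

end TWPaper

namespace SimpleGraph

section Connectivity

variable {V : Type*} {G : SimpleGraph V} {S : Set V}

lemma exists_walk_support_subset_of_connected_induce (hS : (G.induce S).Connected) {a b : V}
    (ha : a ∈ S) (hb : b ∈ S) : ∃ p : G.Walk a b, ∀ v ∈ p.support, v ∈ S := by
  obtain ⟨q⟩ := hS.preconnected ⟨a, ha⟩ ⟨b, hb⟩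
  have hq : ∀ v ∈ (q.map (Embedding.induce S).toHom).support, v ∈ S := by
    simp only [Walk.support_map, List.mem_map]
    rintro _ ⟨v, -, rfl⟩
    exact v.2
  exact ⟨_, hq⟩

lemma connected_induce_of_exists_walk (hne : S.Nonempty)
    (h : ∀ a ∈ S, ∀ b ∈ S, ∃ p : G.Walk a b, ∀ v ∈ p.support, v ∈ S) :
    (G.induce S).Connected := by
  obtain ⟨a, ha⟩ := hne
  rw [connected_iff_exists_forall_reachable]
  refine ⟨⟨a, ha⟩, fun ⟨b, hb⟩ => ?_⟩
  obtain ⟨p, hp⟩ := h a ha b hb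
  exact ⟨p.induce S hp⟩

lemma Walk.IsPath.append_of_forall_mem_support {u v w : V} {p : G.Walk u v} {q : G.Walk v w}
    (hp : p.IsPath) (hq : q.IsPath) (h : ∀ x ∈ p.support, x ∈ q.support → x = v) :
    (p.append q).IsPath := by
  have hq' := hq.support_nodup
  rw [← q.cons_tail_support, List.nodup_cons] at hq'
  rw [Walk.isPath_def, Walk.support_append, List.nodup_append]
  refine ⟨hp.support_nodup, hq'.2, ?_⟩
  rintro x hx y hy rfl
  exact hq'.1 (h x hx (List.mem_of_mem_tail hy) ▸ hy)

end Connectivity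

namespace IsTree

variable {ι : Type*} {T : SimpleGraph ι} {S S₁ S₂ S₃ : Set ι}

lemma support_subset_of_isPath (hT : T.IsTree) (hS : (T.induce S).Connected) {a b : ι}
    (ha : a ∈ S) (hb : b ∈ S) {p : T.Walk a b} (hp : p.IsPath) : ∀ v ∈ p.support, v ∈ S := by
  classical
  obtain ⟨q, hq⟩ := exists_walk_support_subset_of_connected_induce hS ha hb
  obtain rfl : p = q.bypass := (hT.existsUnique_path a b).unique hp q.bypass_isPath
  exact fun v hv => hq v (q.support_bypass_subset_support hv)

lemma connected_induce_inter (hT : T.IsTree) (h₁ : (T.induce S₁).Connected)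
    (h₂ : (T.induce S₂).Connected) (hne : (S₁ ∩ S₂).Nonempty) :
    (T.induce (S₁ ∩ S₂)).Connected := by
  refine connected_induce_of_exists_walk hne fun a ha b hb => ?_
  obtain ⟨p, hp, -⟩ := hT.existsUnique_path a b
  exact ⟨p, fun v hv => ⟨hT.support_subset_of_isPath h₁ ha.1 hb.1 hp v hv,
    hT.support_subset_of_isPath h₂ ha.2 hb.2 hp v hv⟩⟩

/-- With `a ∈ S₁ ∩ S₃`, `b ∈ S₂ ∩ S₃`, `c ∈ S₁ ∩ S₂`: the first vertex `m` of the `c`–`b` path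
lying in `S₃` followed by the `m`–`a` path in `S₃` is the `c`–`a` path, so `m ∈ S₁`. -/
lemma inter_inter_nonempty (hT : T.IsTree) (h₁ : (T.induce S₁).Connected)
    (h₂ : (T.induce S₂).Connected) (h₃ : (T.induce S₃).Connected)
    (h₁₂ : (S₁ ∩ S₂).Nonempty) (h₁₃ : (S₁ ∩ S₃).Nonempty) (h₂₃ : (S₂ ∩ S₃).Nonempty) :
    (S₁ ∩ S₂ ∩ S₃).Nonempty := by
  classical
  obtain ⟨a, ha₁, ha₃⟩ := h₁₃
  obtain ⟨b, hb₂, hb₃⟩ := h₂₃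
  obtain ⟨c, hc₁, hc₂⟩ := h₁₂
  obtain ⟨P, hP, -⟩ := hT.existsUnique_path c b
  obtain ⟨m, hm, hmP, hfirst⟩ := P.exists_mem_support_forall_mem_support_imp_eq
    (P.support.toFinset.filter (· ∈ S₃)) ⟨b, by simp [hb₃]⟩
  have hm₃ : m ∈ S₃ := (Finset.mem_filter.1 hm).2
  obtain ⟨R, hR, -⟩ := hT.existsUnique_path m a
  have hQR : ((P.takeUntil m hmP).append R).IsPath := by
    refine (hP.takeUntil hmP).append_of_forall_mem_support hR fun x hx hxR => hfirst x ?_ hx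
    exact Finset.mem_filter.2 ⟨List.mem_toFinset.2 (P.support_takeUntil_subset_support hmP hx),
      hT.support_subset_of_isPath h₃ hm₃ ha₃ hR x hxR⟩
  have hm₁ := hT.support_subset_of_isPath h₁ hc₁ ha₁ hQR m
    (by simp [Walk.support_append])
  exact ⟨m, ⟨hm₁, hT.support_subset_of_isPath h₂ hc₂ hb₂ hP m hmP⟩, hm₃⟩

lemma sInter_nonempty (hT : T.IsTree) {F : Set (Set ι)} (hF : F.Finite)
    (hconn : ∀ s ∈ F, (T.induce s).Connected) (hpair : ∀ s ∈ F, ∀ t ∈ F, (s ∩ t).Nonempty) :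
    (⋂₀ F).Nonempty := by
  -- Strengthened so that the induction can absorb each new set `s` into `C`.
  suffices key : ∀ C : Set ι, (T.induce C).Connected → (∀ s ∈ F, (C ∩ s).Nonempty) →
      (C ∩ ⋂₀ F).Nonempty by
    simpa using key Set.univ ((induceUnivIso T).connected_iff.2 hT.connected) (by simpa using
      fun s hs => (hpair s hs s hs))
  induction F, hF using Set.Finite.induction_on with
  | empty =>
    intro C hC _
    obtain ⟨⟨x, hx⟩⟩ := hC.nonempty
    exact ⟨x, hx, by simp⟩
  | @insert s F _ _ ih =>
    intro C hC hCF
    have hsF := Set.mem_insert s F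
    have hCs := hCF s hsF
    obtain ⟨x, ⟨hxC, hxs⟩, hxF⟩ : (C ∩ s ∩ ⋂₀ F).Nonempty := by
      refine ih (fun t ht => hconn t (Or.inr ht))
        (fun t ht u hu => hpair t (Or.inr ht) u (Or.inr hu))
        _ (hT.connected_induce_inter hC (hconn s hsF) hCs) fun t ht => ?_
      exact hT.inter_inter_nonempty hC (hconn s hsF) (hconn t (Or.inr ht)) hCs
        (hCF t (Or.inr ht)) (hpair s hsF t (Or.inr ht))
    exact ⟨x, hxC, Set.sInter_insert s F ▸ ⟨hxs, hxF⟩⟩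

end IsTree

end SimpleGraph

namespace TWPaper

def trace {V ι : Type*} (B : ι → Set V) (A : Set V) : Set ι := {x | (B x ∩ A).Nonempty}

lemma mem_trace_of_mem {V ι : Type*} {B : ι → Set V} {A : Set V} {x : ι} {v : V}
    (hx : v ∈ B x) (hv : v ∈ A) : x ∈ trace B A :=
  ⟨v, hx, hv⟩

namespace IsTreeDecomp

variable {V ι : Type*} {G : SimpleGraph V} {T : SimpleGraph ι} {B : ι → Set V} {A : Set V}

lemma reachable_induce_trace_of_mem (hTD : IsTreeDecomp G T B) {v : V} (hv : v ∈ A) {x y : ι}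
    (hx : v ∈ B x) (hy : v ∈ B y) :
    (T.induce (trace B A)).Reachable ⟨x, mem_trace_of_mem hx hv⟩ ⟨y, mem_trace_of_mem hy hv⟩ :=
  ((hTD.2.2 v).preconnected ⟨x, hx⟩ ⟨y, hy⟩).map
    (induceHomOfLE T (show {z | v ∈ B z} ⊆ trace B A from
      fun _ hz => mem_trace_of_mem hz hv)).toHom

lemma connected_induce_trace (hTD : IsTreeDecomp G T B) (hA : (G.induce A).Connected) :
    (T.induce (trace B A)).Connected := by
  have key : ∀ (u w : A), (G.induce A).Walk u w → ∀ x y (hx : u.1 ∈ B x) (hy : w.1 ∈ B y),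
      (T.induce (trace B A)).Reachable ⟨x, mem_trace_of_mem hx u.2⟩
        ⟨y, mem_trace_of_mem hy w.2⟩ := by
    intro u w q
    induction q with
    | nil => exact fun x y hx hy => hTD.reachable_induce_trace_of_mem (Subtype.prop _) hx hy
    | cons h _ ih =>
      intro x y hx hy
      obtain ⟨z, hz, hz'⟩ := hTD.2.1 _ _ h
      exact (hTD.reachable_induce_trace_of_mem (Subtype.prop _) hx hz).trans (ih z y hz' hy)
  obtain ⟨a⟩ := hA.nonempty
  obtain ⟨⟨x, hx⟩⟩ := (hTD.2.2 a).nonempty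
  rw [connected_iff_exists_forall_reachable]
  refine ⟨⟨x, mem_trace_of_mem hx a.2⟩, fun ⟨y, v, hy, hv⟩ => ?_⟩
  obtain ⟨q⟩ := hA.preconnected a ⟨v, hv⟩
  exact key a ⟨v, hv⟩ q x y hx hy

lemma exists_isHitting_bag (hTD : IsTreeDecomp G T B) {𝓑 : Set (Set V)} (hB : IsBramble G 𝓑)
    (hfin : 𝓑.Finite) : ∃ x, IsHitting 𝓑 (B x) := by
  have hpair : ∀ s ∈ trace B '' 𝓑, ∀ t ∈ trace B '' 𝓑, (s ∩ t).Nonempty := by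
    rintro _ ⟨A, hA, rfl⟩ _ ⟨A', hA', rfl⟩
    rcases hB.2 A hA A' hA' with ⟨v, hv, hv'⟩ | ⟨a, ha, b, hb, hab⟩
    · obtain ⟨⟨x, hx⟩⟩ := (hTD.2.2 v).nonempty
      exact ⟨x, ⟨v, hx, hv⟩, ⟨v, hx, hv'⟩⟩
    · obtain ⟨x, hax, hbx⟩ := hTD.2.1 a b hab
      exact ⟨x, ⟨a, hax, ha⟩, ⟨b, hbx, hb⟩⟩
  obtain ⟨x, hx⟩ := hTD.1.sInter_nonempty (hfin.image _)
    (by rintro _ ⟨A, hA, rfl⟩; exact hTD.connected_induce_trace (hB.1 A hA)) hpair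
  exact ⟨x, fun A hA => hx _ ⟨A, hA, rfl⟩⟩

end IsTreeDecomp

lemma hasTDWidthLE_natCard {V : Type*} (G : SimpleGraph V) : HasTDWidthLE G (Nat.card V) := by
  refine ⟨Unit, ⊥, fun _ => Set.univ, ⟨.of_subsingleton, fun v w _ => ⟨(), trivial, trivial⟩,
    fun v => ?_⟩, fun _ => by simp⟩
  have : Nonempty {x : Unit | v ∈ (Set.univ : Set V)} := ⟨⟨(), trivial⟩⟩
  exact IsTree.of_subsingleton.connected

lemma le_treewidth_of_isBramble {V : Type*} {G : SimpleGraph V} {𝓑 : Set (Set V)} {k : ℕ}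
    (hB : IsBramble G 𝓑) (hfin : 𝓑.Finite) (hk : ∀ S, IsHitting 𝓑 S → k + 1 ≤ S.ncard) :
    k ≤ treewidth G := by
  refine le_csInf ⟨_, hasTDWidthLE_natCard G⟩ ?_
  rintro n ⟨ι, T, B, hTD, hwidth⟩
  obtain ⟨x, hx⟩ := hTD.exists_isHitting_bag hB hfin
  have := hk _ hx
  have := hwidth x
  omega

open Function in
lemma ncard_setOf_inter_nonempty_le {V W : Type*} [Finite V] {f : W → Set V}
    (hf : Pairwise (Disjoint on f)) (S : Set V) : {w | (S ∩ f w).Nonempty}.ncard ≤ S.ncard := by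
  refine Nat.card_le_card_of_injective (fun w => ⟨w.2.some, w.2.some_mem.1⟩) ?_
  rintro ⟨w, hw⟩ ⟨w', hw'⟩ h
  have h' : hw.some = hw'.some := congrArg Subtype.val h
  by_contra hne
  exact Set.disjoint_left.1 (hf fun e => hne (Subtype.ext e)) hw.some_mem.2
    (h' ▸ hw'.some_mem.2)

lemma HasTDWidthLE.of_isMinor {V W : Type*} [Finite V] {G : SimpleGraph V} {H : SimpleGraph W}
    {n : ℕ} (hm : IsMinor H G) (h : HasTDWidthLE G n) : HasTDWidthLE H n := by
  obtain ⟨f, hconn, hdisj, hadj⟩ := hm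
  obtain ⟨ι, T, B, hTD, hwidth⟩ := h
  refine ⟨ι, T, fun x => {w | (B x ∩ f w).Nonempty}, ⟨hTD.1, fun a b hab => ?_,
    fun w => hTD.connected_induce_trace (hconn w)⟩,
    fun x => (ncard_setOf_inter_nonempty_le hdisj (B x)).trans (hwidth x)⟩
  obtain ⟨u, hu, v, hv, huv⟩ := hadj a b hab
  obtain ⟨x, hux, hvx⟩ := hTD.2.1 u v huv
  exact ⟨x, ⟨u, hux, hu⟩, ⟨v, hvx, hv⟩⟩

lemma treewidth_le_of_isMinor {V W : Type*} [Finite V] {G : SimpleGraph V} {H : SimpleGraph W}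
    (hm : IsMinor H G) : treewidth H ≤ treewidth G := by
  have h : HasTDWidthLE G (treewidth G) :=
    Nat.sInf_mem (s := {n | HasTDWidthLE G n}) ⟨_, hasTDWidthLE_natCard G⟩
  exact Nat.sInf_le (h.of_isMinor hm)

lemma Touches.symm {V : Type*} {G : SimpleGraph V} {A B : Set V} (h : Touches G A B) :
    Touches G B A := by
  rcases h with ⟨v, hA, hB⟩ | ⟨a, ha, b, hb, hab⟩
  · exact Or.inl ⟨v, hB, hA⟩
  · exact Or.inr ⟨b, hb, a, ha, hab.symm⟩

lemma touches_self {V : Type*} {G : SimpleGraph V} {A : Set V} (h : (G.induce A).Connected) :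
    Touches G A A := by
  obtain ⟨⟨v, hv⟩⟩ := h.nonempty
  exact Or.inl ⟨v, hv, hv⟩

def cross {α β : Type*} (R : Set α) (C : Set β) (i : α) (j : β) : Set (α × β) :=
  {i} ×ˢ C ∪ R ×ˢ {j}

lemma min_ncard_le_ncard_inter_prod {α β : Type*} [Finite α] [Finite β] {R : Set α} {C : Set β}
    {S : Set (α × β)} (h : ∀ i ∈ R, ∀ j ∈ C, (S ∩ cross R C i j).Nonempty) :
    min R.ncard C.ncard ≤ (S ∩ R ×ˢ C).ncard := by
  by_cases hrows : R ⊆ Prod.fst '' (S ∩ R ×ˢ C)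
  · exact (min_le_left _ _).trans ((Set.ncard_le_ncard hrows).trans (Set.ncard_image_le
      (Set.toFinite _)))
  obtain ⟨i, hi, hrow⟩ := Set.not_subset.1 hrows
  have hcols : C ⊆ Prod.snd '' (S ∩ R ×ˢ C) := by
    intro j hj
    obtain ⟨p, hpS, ⟨hp₁, hp₂⟩ | ⟨hp₁, hp₂⟩⟩ := h i hi j hj
    · exact absurd ⟨p, ⟨hpS, (Set.mem_singleton_iff.1 hp₁) ▸ hi, hp₂⟩, hp₁⟩ hrow
    · exact ⟨p, ⟨hpS, hp₁, (Set.mem_singleton_iff.1 hp₂) ▸ hj⟩, hp₂⟩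
  exact (min_le_right _ _).trans ((Set.ncard_le_ncard hcols).trans (Set.ncard_image_le
    (Set.toFinite _)))

section Grid

variable {k : ℕ}

def nonLast (k : ℕ) : Set (Fin k) := {i | (i : ℕ) < k - 1}

def bottomRow (k : ℕ) : Set (Fin k × Fin k) := {p | (p.1 : ℕ) = k - 1}

def rightCol (k : ℕ) : Set (Fin k × Fin k) := nonLast k ×ˢ {j : Fin k | (j : ℕ) = k - 1}

def gridBramble (k : ℕ) : Set (Set (Fin k × Fin k)) :=
  {A | ∃ i ∈ nonLast k, ∃ j ∈ nonLast k, A = cross (nonLast k) (nonLast k) i j} ∪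
    {bottomRow k, rightCol k}

lemma ncard_nonLast : (nonLast k).ncard = k - 1 := by
  have h : Fin.val '' nonLast k = Set.Iio (k - 1) := by
    ext n
    refine ⟨fun ⟨i, hi, hin⟩ => hin ▸ hi, fun hn => ⟨⟨n, ?_⟩, hn, rfl⟩⟩
    simp only [Set.mem_Iio] at hn
    omega
  rw [← Set.ncard_image_of_injective _ Fin.val_injective, h, Set.ncard_Iio_nat]

lemma grid_connected_induce_row (i : Fin k) {m : ℕ} (hm : 0 < m) :
    ((grid k).induce ({i} ×ˢ {j : Fin k | (j : ℕ) < m})).Connected := by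
  rw [connected_iff_exists_forall_reachable]
  refine ⟨⟨(i, ⟨0, i.pos⟩), rfl, hm⟩, ?_⟩
  rintro ⟨⟨i', j, hj⟩, rfl, hjm⟩
  induction j with
  | zero => rfl
  | succ j ih =>
    exact (ih (Nat.lt_of_succ_lt hj) (Nat.lt_of_succ_lt hjm)).trans
      (Adj.reachable (Or.inl ⟨rfl, Or.inl rfl⟩))

lemma grid_connected_induce_col (j : Fin k) {m : ℕ} (hm : 0 < m) :
    ((grid k).induce ({i : Fin k | (i : ℕ) < m} ×ˢ {j})).Connected := by
  rw [connected_iff_exists_forall_reachable]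
  refine ⟨⟨(⟨0, j.pos⟩, j), hm, rfl⟩, ?_⟩
  rintro ⟨⟨⟨i, hi⟩, j'⟩, him, rfl⟩
  induction i with
  | zero => rfl
  | succ i ih =>
    exact (ih (Nat.lt_of_succ_lt hi) (Nat.lt_of_succ_lt him)).trans
      (Adj.reachable (Or.inr ⟨rfl, Or.inl rfl⟩))

lemma connected_induce_cross (hk : 2 ≤ k) {i j : Fin k} (hi : i ∈ nonLast k)
    (hj : j ∈ nonLast k) : ((grid k).induce (cross (nonLast k) (nonLast k) i j)).Connected :=
  induce_union_connected (grid_connected_induce_row i (by omega)).preconnected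
    (grid_connected_induce_col j (by omega)).preconnected ⟨(i, j), ⟨rfl, hj⟩, ⟨hi, rfl⟩⟩

lemma connected_induce_bottomRow (hk : 2 ≤ k) : ((grid k).induce (bottomRow k)).Connected := by
  have h : bottomRow k = {⟨k - 1, by omega⟩} ×ˢ {j : Fin k | (j : ℕ) < k} := by
    ext ⟨i, j⟩
    simp [bottomRow, Fin.ext_iff]
  rw [h]
  exact grid_connected_induce_row _ (by omega)

lemma connected_induce_rightCol (hk : 2 ≤ k) : ((grid k).induce (rightCol k)).Connected := by
  have h : rightCol k = {i : Fin k | (i : ℕ) < k - 1} ×ˢ {⟨k - 1, by omega⟩} := by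
    ext ⟨i, j⟩
    simp [rightCol, nonLast, Fin.ext_iff]
  rw [h]
  exact grid_connected_induce_col _ (by omega)

lemma isBramble_gridBramble (hk : 2 ≤ k) : IsBramble (grid k) (gridBramble k) := by
  have hconn : ∀ A ∈ gridBramble k, ((grid k).induce A).Connected := by
    rintro A (⟨i, hi, j, hj, rfl⟩ | rfl | rfl)
    exacts [connected_induce_cross hk hi hj, connected_induce_bottomRow hk,
      connected_induce_rightCol hk]
  let a : Fin k := ⟨k - 2, by omega⟩
  let z : Fin k := ⟨k - 1, by omega⟩
  have ha : a ∈ nonLast k := show k - 2 < k - 1 by omega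
  have haz : (a : ℕ) + 1 = z := show k - 2 + 1 = k - 1 by omega
  have hcb : ∀ i j, j ∈ nonLast k →
      Touches (grid k) (cross (nonLast k) (nonLast k) i j) (bottomRow k) :=
    fun i j _ => Or.inr ⟨(a, j), Or.inr ⟨ha, rfl⟩, (z, j), rfl, Or.inr ⟨rfl, Or.inl haz⟩⟩
  have hcr : ∀ i j, i ∈ nonLast k →
      Touches (grid k) (cross (nonLast k) (nonLast k) i j) (rightCol k) :=
    fun i j hi => Or.inr ⟨(i, a), Or.inl ⟨rfl, ha⟩, (i, z), ⟨hi, rfl⟩, Or.inl ⟨rfl, Or.inl haz⟩⟩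
  have hbr : Touches (grid k) (bottomRow k) (rightCol k) :=
    Or.inr ⟨(z, z), rfl, (a, z), ⟨ha, rfl⟩, Or.inr ⟨rfl, Or.inr haz⟩⟩
  refine ⟨hconn, ?_⟩
  rintro A (⟨i, hi, j, hj, rfl⟩ | rfl | rfl) B (⟨i', hi', j', hj', rfl⟩ | rfl | rfl)
  exacts [Or.inl ⟨(i, j'), Or.inl ⟨rfl, hj'⟩, Or.inr ⟨hi, rfl⟩⟩, hcb i j hj, hcr i j hi,
    (hcb i' j' hj').symm, touches_self (connected_induce_bottomRow hk), hbr,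
    (hcr i' j' hi').symm, hbr.symm, touches_self (connected_induce_rightCol hk)]

lemma le_ncard_of_isHitting_gridBramble (hk : 2 ≤ k) {S : Set (Fin k × Fin k)}
    (hS : IsHitting (gridBramble k) S) : k + 1 ≤ S.ncard := by
  have hinner : k - 1 ≤ (S ∩ nonLast k ×ˢ nonLast k).ncard := by
    have := min_ncard_le_ncard_inter_prod (S := S) fun i hi j hj =>
      hS _ (Or.inl ⟨i, hi, j, hj, rfl⟩)
    rwa [ncard_nonLast, min_self] at this
  have hbottom : 0 < (S ∩ bottomRow k).ncard :=
    (Set.ncard_pos (Set.toFinite _)).2 (hS _ (Or.inr (Or.inl rfl)))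
  have hright : 0 < (S ∩ rightCol k).ncard :=
    (Set.ncard_pos (Set.toFinite _)).2 (hS _ (Or.inr (Or.inr rfl)))
  have hd₁ : Disjoint (nonLast k ×ˢ nonLast k) (bottomRow k) :=
    Set.disjoint_left.2 fun _ hp hp' => Nat.ne_of_lt hp.1 hp'
  have hd₂ : Disjoint (nonLast k ×ˢ nonLast k ∪ bottomRow k) (rightCol k) := by
    refine Set.disjoint_left.2 fun p hp hp' => ?_
    rcases hp with hp | hp
    exacts [Nat.ne_of_lt hp.2 hp'.2, Nat.ne_of_lt hp'.1 hp]
  calc k + 1 ≤ (S ∩ nonLast k ×ˢ nonLast k).ncard + (S ∩ bottomRow k).ncard +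
        (S ∩ rightCol k).ncard := by omega
    _ = (S ∩ nonLast k ×ˢ nonLast k ∪ S ∩ bottomRow k ∪ S ∩ rightCol k).ncard := by
      rw [Set.ncard_union_eq (hd₂.mono (Set.union_subset_union Set.inter_subset_right
          Set.inter_subset_right) Set.inter_subset_right),
        Set.ncard_union_eq (hd₁.mono Set.inter_subset_right Set.inter_subset_right)]
    _ ≤ S.ncard := Set.ncard_le_ncard (Set.union_subset (Set.union_subset Set.inter_subset_left
        Set.inter_subset_left) Set.inter_subset_left)

end Grid

/-- the k × k grid has a bramble of order at least k+1, hence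
treewidth at least k, and any graph with a k × k grid minor has treewidth
at least k. -/
theorem grid_bramble_treewidth (k : ℕ) (hk : 2 ≤ k) :
    (∃ 𝓑 : Set (Set (Fin k × Fin k)), IsBramble (grid k) 𝓑 ∧
      ∀ S : Set (Fin k × Fin k), IsHitting 𝓑 S → k + 1 ≤ S.ncard) ∧
    k ≤ treewidth (grid k) ∧
    ∀ (V : Type) [Fintype V] (G : SimpleGraph V), IsMinor (grid k) G → k ≤ treewidth G := by
  have hB := isBramble_gridBramble hk
  have hhit : ∀ S, IsHitting (gridBramble k) S → k + 1 ≤ S.ncard :=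
    fun _ hS => le_ncard_of_isHitting_gridBramble hk hS
  have htw : k ≤ treewidth (grid k) := le_treewidth_of_isBramble hB (Set.toFinite _) hhit
  exact ⟨⟨gridBramble k, hB, hhit⟩, htw, fun _ _ _ hm => htw.trans (treewidth_le_of_isMinor hm)⟩

end TWPaper
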